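/- Let V be a finite-dimensional real vector space with a nondegenerate symmetric bilinear form B, and let g be a B-preserving involution of V with eigenspace decomposition V = E₊ ⊕ E₋. Then the signature of B equals the signature of B restricted to E₊ plus the signature of B restricted to E₋, and the trace-weighted signature tr(g|V₊) − tr(g|V₋) over a B-orthogonal decomposition into positive and negative definite g-invariant subspaces equals sign(B|E₊) − sign(B|E₋). -/

import Mathlib

section SignatureDefs

variable {V : Type*} [AddCommGroup V] [Module ℝ V]

/-- A bilinear form is positive definite on a submodule. -/
def PosDefOn (B : LinearMap.BilinForm ℝ V) (W : Submodule ℝ V) : Prop :=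
  ∀ x ∈ W, x ≠ 0 → 0 < B x x

/-- A bilinear form is negative definite on a submodule. -/
def NegDefOn (B : LinearMap.BilinForm ℝ V) (W : Submodule ℝ V) : Prop :=
  ∀ x ∈ W, x ≠ 0 → B x x < 0

/-- The maximal dimension of a subspace of `W` on which `B` is positive definite. -/
noncomputable def maxPosDim (B : LinearMap.BilinForm ℝ V) (W : Submodule ℝ V) : ℕ :=
  sSup {n : ℕ | ∃ U : Submodule ℝ V, U ≤ W ∧ PosDefOn B U ∧ Module.finrank ℝ U = n}

/-- The maximal dimension of a subspace of `W` on which `B` is negative definite. -/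
noncomputable def maxNegDim (B : LinearMap.BilinForm ℝ V) (W : Submodule ℝ V) : ℕ :=
  sSup {n : ℕ | ∃ U : Submodule ℝ V, U ≤ W ∧ NegDefOn B U ∧ Module.finrank ℝ U = n}

/-- The signature of the symmetric bilinear form `B` restricted to the submodule `W`. -/
noncomputable def sigOn (B : LinearMap.BilinForm ℝ V) (W : Submodule ℝ V) : ℤ :=
  (maxPosDim B W : ℤ) - (maxNegDim B W : ℤ)

end SignatureDefs

open Module Submodule

section Aux

variable {V : Type*} [AddCommGroup V] [Module ℝ V] [FiniteDimensional ℝ V]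

lemma posDefOn_neg_iff (B : LinearMap.BilinForm ℝ V) (U : Submodule ℝ V) :
    PosDefOn (-B) U ↔ NegDefOn B U := by
  simp [PosDefOn, NegDefOn, neg_pos]

lemma negDefOn_neg_iff (B : LinearMap.BilinForm ℝ V) (U : Submodule ℝ V) :
    NegDefOn (-B) U ↔ PosDefOn B U := by
  simp [PosDefOn, NegDefOn, neg_neg]

lemma maxNegDim_eq_neg (B : LinearMap.BilinForm ℝ V) (W : Submodule ℝ V) :
    maxNegDim B W = maxPosDim (-B) W := by
  unfold maxNegDim maxPosDim
  congr 1
  ext n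
  simp only [Set.mem_setOf_eq, posDefOn_neg_iff]

lemma maxPosDim_eq_of_decomp (B : LinearMap.BilinForm ℝ V) (W P N : Submodule ℝ V)
    (hsup : P ⊔ N = W) (hP : PosDefOn B P) (hN : NegDefOn B N) :
    maxPosDim B W = finrank ℝ P := by
  have hdisj : ∀ U : Submodule ℝ V, PosDefOn B U → U ⊓ N = ⊥ := by
    intro U hU
    rw [eq_bot_iff]
    intro x hx
    by_contra hx0
    rw [Submodule.mem_bot] at hx0
    exact absurd (hU x hx.1 hx0) (not_lt.2 (le_of_lt (hN x hx.2 hx0)))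
  have hrankW : finrank ℝ P + finrank ℝ N = finrank ℝ W := by
    rw [← hsup, ← Submodule.finrank_sup_add_finrank_inf_eq, hdisj P hP, finrank_bot, add_zero]
  have hNW : N ≤ W := hsup ▸ le_sup_right
  have hbound : ∀ n ∈ {n : ℕ | ∃ U : Submodule ℝ V, U ≤ W ∧ PosDefOn B U ∧ finrank ℝ U = n},
      n ≤ finrank ℝ P := by
    rintro n ⟨U, hUW, hU, rfl⟩
    have h2 := Submodule.finrank_sup_add_finrank_inf_eq U N
    rw [hdisj U hU, finrank_bot, add_zero] at h2
    have h3 : finrank ℝ ↥(U ⊔ N) ≤ finrank ℝ W :=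
      Submodule.finrank_mono (sup_le hUW hNW)
    omega
  have hmem : finrank ℝ P ∈
      {n : ℕ | ∃ U : Submodule ℝ V, U ≤ W ∧ PosDefOn B U ∧ finrank ℝ U = n} :=
    ⟨P, hsup ▸ le_sup_left, hP, rfl⟩
  exact le_antisymm (csSup_le ⟨_, hmem⟩ hbound) (le_csSup ⟨finrank ℝ P, hbound⟩ hmem)

lemma maxNegDim_eq_of_decomp (B : LinearMap.BilinForm ℝ V) (W P N : Submodule ℝ V)
    (hsup : P ⊔ N = W) (hP : PosDefOn B P) (hN : NegDefOn B N) :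
    maxNegDim B W = finrank ℝ N := by
  rw [maxNegDim_eq_neg]
  exact maxPosDim_eq_of_decomp (-B) W N P (by rw [sup_comm]; exact hsup)
    ((posDefOn_neg_iff B N).2 hN) ((negDefOn_neg_iff B P).2 hP)

lemma span_posDef (B : LinearMap.BilinForm ℝ V) {ι : Type*} [Fintype ι]
    (v : Basis ι ℝ V) (hv : B.IsOrthoᵢ v) (s : Set ι)
    (hs : ∀ i ∈ s, 0 < B (v i) (v i)) :
    PosDefOn B (span ℝ (v '' s)) := by
  intro x hx hx0
  have hsupp : ↑(v.repr x).support ⊆ s := v.mem_span_image.1 hx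
  have hxx : B x x = ∑ j, (v.repr x j) * ((v.repr x j) * B (v j) (v j)) := by
    conv_lhs => rw [← v.sum_repr x]
    simp only [map_sum, LinearMap.coe_sum, Finset.sum_apply, map_smul, LinearMap.smul_apply,
      smul_eq_mul]
    refine Finset.sum_congr rfl fun j _ => ?_
    congr 1
    rw [Finset.sum_eq_single j]
    · intro b _ hb
      rw [hv hb, mul_zero]
    · intro h; exact absurd (Finset.mem_univ j) h
  have hterm : ∀ i, 0 ≤ (v.repr x i) * ((v.repr x i) * B (v i) (v i)) := by
    intro i
    by_cases hi : i ∈ s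
    · have hd := hs i hi
      rw [← mul_assoc]
      exact mul_nonneg (mul_self_nonneg _) hd.le
    · have h0 : v.repr x i = 0 := by
        by_contra h
        exact hi (hsupp (Finsupp.mem_support_iff.2 h))
      simp [h0]
  obtain ⟨i, hi⟩ : ∃ i, v.repr x i ≠ 0 := by
    by_contra h
    push_neg at h
    apply hx0
    have : v.repr x = 0 := Finsupp.ext h
    simpa using congrArg v.repr.symm this
  have his : i ∈ s := hsupp (Finsupp.mem_support_iff.2 hi)
  have hpos : 0 < (v.repr x i) * ((v.repr x i) * B (v i) (v i)) := by
    have hd := hs i his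
    rw [← mul_assoc]
    exact mul_pos (mul_self_pos.2 hi) hd
  rw [hxx]
  exact Finset.sum_pos' (fun j _ => hterm j) ⟨i, Finset.mem_univ i, hpos⟩

lemma exists_decomp (B : LinearMap.BilinForm ℝ V) (hsymm : ∀ x y, B x y = B y x)
    (W : Submodule ℝ V) (hnd : ∀ x ∈ W, (∀ y ∈ W, B x y = 0) → x = 0) :
    ∃ P N : Submodule ℝ V, P ⊔ N = W ∧ PosDefOn B P ∧ NegDefOn B N := by
  set B' : LinearMap.BilinForm ℝ W := B.domRestrict₁₂ W W with hB'def
  have hB'apply : ∀ x y : W, B' x y = B (x : V) (y : V) := fun x y => rfl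
  have hsymm' : B'.IsSymm := ⟨fun x y => by
    simpa [hB'apply] using hsymm (x : V) (y : V)⟩
  obtain ⟨v, hv⟩ := LinearMap.BilinForm.exists_orthogonal_basis (LinearMap.BilinForm.isSymm_iff.1 hsymm')
  have hdiag : ∀ i, B' (v i) (v i) ≠ 0 := by
    intro i h0
    apply v.ne_zero i
    have hvi : ((v i : W) : V) = 0 := by
      apply hnd _ (v i).2
      intro y hy
      have : B' (v i) ⟨y, hy⟩ = 0 := by
        conv_lhs => rw [← v.sum_repr ⟨y, hy⟩]
        rw [map_sum]
        refine Finset.sum_eq_zero fun j _ => ?_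
        rw [map_smul, smul_eq_mul]
        rcases eq_or_ne i j with rfl | hij
        · rw [h0, mul_zero]
        · rw [hv hij, mul_zero]
      exact this
    exact Subtype.ext hvi
  set s : Set (Fin (finrank ℝ W)) := {i | 0 < B' (v i) (v i)} with hsdef
  have hvneg : (-B').IsOrthoᵢ v := fun {i j} hij => by
    have h0 : B' (v i) (v j) = 0 := hv hij
    show (-B') (v i) (v j) = 0
    simp [h0]
  have hPpos := span_posDef B' v hv s (fun i hi => hi)
  have hNpos := span_posDef (-B') v hvneg sᶜ (fun i hi => by
    have h1 : ¬ 0 < B' (v i) (v i) := hi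
    have h2 := hdiag i
    simp only [LinearMap.neg_apply]
    cases lt_or_gt_of_ne h2 with
    | inl h => linarith
    | inr h => exact absurd h h1)
  refine ⟨(span ℝ (v '' s)).map W.subtype, (span ℝ (v '' sᶜ)).map W.subtype, ?_, ?_, ?_⟩
  · rw [← Submodule.map_sup, ← Submodule.span_union, ← Set.image_union,
      Set.union_compl_self, Set.image_univ, v.span_eq, Submodule.map_subtype_top]
  · rintro x hx hx0
    obtain ⟨x', hx', rfl⟩ := Submodule.mem_map.1 hx
    have hx'0 : x' ≠ 0 := fun h => hx0 (by rw [h]; rfl)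
    exact hPpos x' hx' hx'0
  · rintro x hx hx0
    obtain ⟨x', hx', rfl⟩ := Submodule.mem_map.1 hx
    have hx'0 : x' ≠ 0 := fun h => hx0 (by rw [h]; rfl)
    have := hNpos x' hx' hx'0
    simp only [LinearMap.neg_apply, neg_pos] at this
    exact this

lemma trace_restrict_involution (g : V →ₗ[ℝ] V) (hgg : ∀ x, g (g x) = x)
    (U : Submodule ℝ V) (hU : ∀ x ∈ U, g x ∈ U) :
    LinearMap.trace ℝ U (g.restrict hU) =
      (finrank ℝ ↥(U ⊓ LinearMap.ker (g - LinearMap.id)) : ℝ) -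
      (finrank ℝ ↥(U ⊓ LinearMap.ker (g + LinearMap.id)) : ℝ) := by
  set h : U →ₗ[ℝ] U := g.restrict hU with hhdef
  have hcoe : ∀ x : U, (h x : V) = g x := fun x => rfl
  have hh : ∀ x : U, h (h x) = x := fun x => Subtype.ext (by rw [hcoe, hcoe, hgg])
  set p : U →ₗ[ℝ] U := (2⁻¹ : ℝ) • (LinearMap.id + h) with hpdef
  set q : U →ₗ[ℝ] U := (2⁻¹ : ℝ) • (LinearMap.id - h) with hqdef
  have happ : ∀ x, p x = (2⁻¹:ℝ) • (x + h x) := fun x => by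
    simp [hpdef, LinearMap.smul_apply, LinearMap.add_apply]
  have hqapp : ∀ x, q x = (2⁻¹:ℝ) • (x - h x) := fun x => by
    simp [hqdef, LinearMap.smul_apply, LinearMap.sub_apply]
  have hp2 : ∀ x, p (p x) = p x := fun x => by
    simp only [happ, map_smul, map_add, hh x]
    module
  have hq2 : ∀ x, q (q x) = q x := fun x => by
    simp only [hqapp, map_smul, map_sub, hh x]
    module
  have hprj : LinearMap.IsProj (LinearMap.range p) p :=
    ⟨fun x => LinearMap.mem_range.2 ⟨x, rfl⟩, by rintro x ⟨y, rfl⟩; exact hp2 y⟩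
  have hqrj : LinearMap.IsProj (LinearMap.range q) q :=
    ⟨fun x => LinearMap.mem_range.2 ⟨x, rfl⟩, by rintro x ⟨y, rfl⟩; exact hq2 y⟩
  have hpq : p - q = h := by
    ext x
    simp only [LinearMap.sub_apply, happ, hqapp]
    push_cast
    module
  have hrp : (LinearMap.range p).map U.subtype = U ⊓ LinearMap.ker (g - LinearMap.id) := by
    ext x
    simp only [Submodule.mem_map, LinearMap.mem_range, Submodule.mem_inf, LinearMap.mem_ker,
      LinearMap.sub_apply, LinearMap.id_apply, sub_eq_zero]
    constructor
    · rintro ⟨y, ⟨z, rfl⟩, rfl⟩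
      refine ⟨(p z).2, ?_⟩
      show g ((p z : U) : V) = ((p z : U) : V)
      have hc : ((p z : U) : V) = (2⁻¹:ℝ) • ((z:V) + g z) := by
        rw [happ]; push_cast [hcoe]; rfl
      rw [hc, map_smul, map_add, hgg]
      module
    · rintro ⟨hxU, hgx⟩
      refine ⟨⟨x, hxU⟩, ⟨⟨x, hxU⟩, ?_⟩, rfl⟩
      apply Subtype.ext
      rw [happ]
      push_cast [hcoe]
      rw [hgx]
      module
  have hrq : (LinearMap.range q).map U.subtype = U ⊓ LinearMap.ker (g + LinearMap.id) := by
    ext x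
    simp only [Submodule.mem_map, LinearMap.mem_range, Submodule.mem_inf, LinearMap.mem_ker,
      LinearMap.add_apply, LinearMap.id_apply, add_eq_zero_iff_eq_neg]
    constructor
    · rintro ⟨y, ⟨z, rfl⟩, rfl⟩
      refine ⟨(q z).2, ?_⟩
      show g ((q z : U) : V) = -((q z : U) : V)
      have hc : ((q z : U) : V) = (2⁻¹:ℝ) • ((z:V) - g z) := by
        rw [hqapp]; push_cast [hcoe]; rfl
      rw [hc, map_smul, map_sub, hgg]
      module
    · rintro ⟨hxU, hgx⟩
      refine ⟨⟨x, hxU⟩, ⟨⟨x, hxU⟩, ?_⟩, rfl⟩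
      apply Subtype.ext
      rw [hqapp]
      push_cast [hcoe]
      rw [hgx]
      module
  have e1 : finrank ℝ ↥(LinearMap.range p) = finrank ℝ ↥(U ⊓ LinearMap.ker (g - LinearMap.id)) := by
    rw [← hrp, Submodule.finrank_map_subtype_eq]
  have e2 : finrank ℝ ↥(LinearMap.range q) = finrank ℝ ↥(U ⊓ LinearMap.ker (g + LinearMap.id)) := by
    rw [← hrq, Submodule.finrank_map_subtype_eq]
  rw [← hpq, map_sub, hprj.trace, hqrj.trace, e1, e2]

end Aux

/-- For a nondegenerate symmetric bilinear form B on a finite-dimensional real vector space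
and a B-preserving involution g with eigenspaces E₊ = ker(g − id) and E₋ = ker(g + id):
the signature of B is the sum of the signatures of B restricted to E₊ and E₋, and for any
B-orthogonal decomposition V = V₊ ⊕ V₋ into g-invariant subspaces with B positive definite
on V₊ and negative definite on V₋, the trace-weighted signature
tr(g|V₊) − tr(g|V₋) equals sign(B|E₊) − sign(B|E₋). -/
theorem stmt_4 {V : Type*} [AddCommGroup V] [Module ℝ V] [FiniteDimensional ℝ V]
    (B : LinearMap.BilinForm ℝ V) (hsymm : ∀ x y, B x y = B y x)
    (hnd : ∀ x : V, (∀ y, B x y = 0) → x = 0)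
    (g : V →ₗ[ℝ] V) (hg : g ∘ₗ g = LinearMap.id)
    (hB : ∀ x y, B (g x) (g y) = B x y) :
    sigOn B ⊤ = sigOn B (LinearMap.ker (g - LinearMap.id)) +
        sigOn B (LinearMap.ker (g + LinearMap.id)) ∧
    ∀ (Vp Vn : Submodule ℝ V) (hp : ∀ x ∈ Vp, g x ∈ Vp) (hn : ∀ x ∈ Vn, g x ∈ Vn),
      IsCompl Vp Vn → (∀ x ∈ Vp, ∀ y ∈ Vn, B x y = 0) →
      PosDefOn B Vp → NegDefOn B Vn →
      LinearMap.trace ℝ Vp (g.restrict hp) - LinearMap.trace ℝ Vn (g.restrict hn) =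
        ((sigOn B (LinearMap.ker (g - LinearMap.id)) -
          sigOn B (LinearMap.ker (g + LinearMap.id)) : ℤ) : ℝ) := by
  have hgg : ∀ x, g (g x) = x := fun x => by
    have := LinearMap.ext_iff.1 hg x
    simpa using this
  set Ep := LinearMap.ker (g - LinearMap.id) with hEpdef
  set En := LinearMap.ker (g + LinearMap.id) with hEndef
  have hmemEp : ∀ x, x ∈ Ep ↔ g x = x := fun x => by
    rw [hEpdef, LinearMap.mem_ker, LinearMap.sub_apply, LinearMap.id_apply, sub_eq_zero]
  have hmemEn : ∀ x, x ∈ En ↔ g x = -x := fun x => by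
    rw [hEndef, LinearMap.mem_ker, LinearMap.add_apply, LinearMap.id_apply,
      add_eq_zero_iff_eq_neg]
  have hortho : ∀ x ∈ Ep, ∀ y ∈ En, B x y = 0 := by
    intro x hx y hy
    have h1 := hB x y
    rw [(hmemEp x).1 hx, (hmemEn y).1 hy, map_neg] at h1
    linarith
  have horthoSymm : ∀ x ∈ En, ∀ y ∈ Ep, B x y = 0 := fun x hx y hy => by
    rw [hsymm]; exact hortho y hy x hx
  have hsupE : Ep ⊔ En = ⊤ := by
    rw [eq_top_iff]
    intro x _
    have h1 : (2⁻¹ : ℝ) • (x + g x) ∈ Ep := (hmemEp _).2 (by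
      rw [map_smul, map_add, hgg]
      module)
    have h2 : (2⁻¹ : ℝ) • (x - g x) ∈ En := (hmemEn _).2 (by
      rw [map_smul, map_sub, hgg]
      module)
    have hx : x = (2⁻¹ : ℝ) • (x + g x) + (2⁻¹ : ℝ) • (x - g x) := by module
    rw [hx]
    exact Submodule.add_mem_sup h1 h2
  have hinfE : Ep ⊓ En = ⊥ := by
    rw [eq_bot_iff]
    rintro x ⟨h1, h2⟩
    rw [Submodule.mem_bot]
    have e1 := (hmemEp x).1 h1
    have e2 := (hmemEn x).1 h2
    rw [e1] at e2
    have h3 : (2:ℝ) • x = 0 := by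
      rw [two_smul]
      exact add_eq_zero_iff_eq_neg.2 e2
    exact (smul_eq_zero.1 h3).resolve_left two_ne_zero
  have hndEp : ∀ x ∈ Ep, (∀ y ∈ Ep, B x y = 0) → x = 0 := by
    intro x hx h
    apply hnd
    intro y
    have hy : y ∈ Ep ⊔ En := by rw [hsupE]; trivial
    obtain ⟨a, ha, b, hb, rfl⟩ := Submodule.mem_sup.1 hy
    rw [map_add, h a ha, hortho x hx b hb, add_zero]
  have hndEn : ∀ x ∈ En, (∀ y ∈ En, B x y = 0) → x = 0 := by
    intro x hx h
    apply hnd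
    intro y
    have hy : y ∈ Ep ⊔ En := by rw [hsupE]; trivial
    obtain ⟨a, ha, b, hb, rfl⟩ := Submodule.mem_sup.1 hy
    rw [map_add, h b hb, horthoSymm x hx a ha, zero_add]
  have hsum2 : ∀ (P₁ P₂ : Submodule ℝ V), P₁ ≤ Ep → P₂ ≤ En →
      ∀ x ∈ P₁ ⊔ P₂, ∃ a ∈ P₁, ∃ b ∈ P₂, x = a + b ∧ B x x = B a a + B b b := by
    intro P₁ P₂ h1 h2 x hx
    obtain ⟨a, ha, b, hb, hab⟩ := Submodule.mem_sup.1 hx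
    refine ⟨a, ha, b, hb, hab.symm, ?_⟩
    rw [← hab]
    simp only [map_add, LinearMap.add_apply]
    rw [hortho a (h1 ha) b (h2 hb), horthoSymm b (h2 hb) a (h1 ha)]
    ring
  have hPosSup : ∀ (P₁ P₂ : Submodule ℝ V), P₁ ≤ Ep → P₂ ≤ En → PosDefOn B P₁ →
      PosDefOn B P₂ → PosDefOn B (P₁ ⊔ P₂) := by
    intro P₁ P₂ h1 h2 hp1 hp2 x hx hx0
    obtain ⟨a, ha, b, hb, hxab, hBx⟩ := hsum2 P₁ P₂ h1 h2 x hx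
    have hBa : 0 ≤ B a a := by
      rcases eq_or_ne a 0 with rfl | h
      · simp
      · exact (hp1 a ha h).le
    have hBb : 0 ≤ B b b := by
      rcases eq_or_ne b 0 with rfl | h
      · simp
      · exact (hp2 b hb h).le
    have h0 : a ≠ 0 ∨ b ≠ 0 := by
      by_contra hc
      push_neg at hc
      exact hx0 (by rw [hxab, hc.1, hc.2, add_zero])
    rw [hBx]
    rcases h0 with h | h
    · have := hp1 a ha h; linarith
    · have := hp2 b hb h; linarith
  have hNegSup : ∀ (N₁ N₂ : Submodule ℝ V), N₁ ≤ Ep → N₂ ≤ En → NegDefOn B N₁ →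
      NegDefOn B N₂ → NegDefOn B (N₁ ⊔ N₂) := by
    intro N₁ N₂ h1 h2 hn1 hn2 x hx hx0
    obtain ⟨a, ha, b, hb, hxab, hBx⟩ := hsum2 N₁ N₂ h1 h2 x hx
    have hBa : B a a ≤ 0 := by
      rcases eq_or_ne a 0 with rfl | h
      · simp
      · exact (hn1 a ha h).le
    have hBb : B b b ≤ 0 := by
      rcases eq_or_ne b 0 with rfl | h
      · simp
      · exact (hn2 b hb h).le
    have h0 : a ≠ 0 ∨ b ≠ 0 := by
      by_contra hc
      push_neg at hc
      exact hx0 (by rw [hxab, hc.1, hc.2, add_zero])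
    rw [hBx]
    rcases h0 with h | h
    · have := hn1 a ha h; linarith
    · have := hn2 b hb h; linarith
  have hrank : ∀ (P₁ P₂ : Submodule ℝ V), P₁ ≤ Ep → P₂ ≤ En →
      finrank ℝ ↥(P₁ ⊔ P₂) = finrank ℝ P₁ + finrank ℝ P₂ := by
    intro P₁ P₂ h1 h2
    have hinf : P₁ ⊓ P₂ = ⊥ := by
      rw [eq_bot_iff, ← hinfE]
      exact inf_le_inf h1 h2
    rw [← Submodule.finrank_sup_add_finrank_inf_eq, hinf, finrank_bot, add_zero]
  obtain ⟨Pp, Np, hsupP, hPp, hNp⟩ := exists_decomp B hsymm Ep hndEp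
  obtain ⟨Pn, Nn, hsupN, hPn, hNn⟩ := exists_decomp B hsymm En hndEn
  have hPpE : Pp ≤ Ep := hsupP ▸ le_sup_left
  have hNpE : Np ≤ Ep := hsupP ▸ le_sup_right
  have hPnE : Pn ≤ En := hsupN ▸ le_sup_left
  have hNnE : Nn ≤ En := hsupN ▸ le_sup_right
  have hsupT : (Pp ⊔ Pn) ⊔ (Np ⊔ Nn) = ⊤ := by
    rw [sup_sup_sup_comm, hsupP, hsupN, hsupE]
  have eT1 : maxPosDim B ⊤ = finrank ℝ ↥(Pp ⊔ Pn) :=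
    maxPosDim_eq_of_decomp B ⊤ _ _ hsupT (hPosSup _ _ hPpE hPnE hPp hPn)
      (hNegSup _ _ hNpE hNnE hNp hNn)
  have eT2 : maxNegDim B ⊤ = finrank ℝ ↥(Np ⊔ Nn) :=
    maxNegDim_eq_of_decomp B ⊤ _ _ hsupT (hPosSup _ _ hPpE hPnE hPp hPn)
      (hNegSup _ _ hNpE hNnE hNp hNn)
  have eP1 : maxPosDim B Ep = finrank ℝ Pp := maxPosDim_eq_of_decomp B Ep Pp Np hsupP hPp hNp
  have eP2 : maxNegDim B Ep = finrank ℝ Np := maxNegDim_eq_of_decomp B Ep Pp Np hsupP hPp hNp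
  have eN1 : maxPosDim B En = finrank ℝ Pn := maxPosDim_eq_of_decomp B En Pn Nn hsupN hPn hNn
  have eN2 : maxNegDim B En = finrank ℝ Nn := maxNegDim_eq_of_decomp B En Pn Nn hsupN hPn hNn
  constructor
  · simp only [sigOn, eT1, eT2, eP1, eP2, eN1, eN2, hrank Pp Pn hPpE hPnE,
      hrank Np Nn hNpE hNnE]
    push_cast
    ring
  · intro Vp Vn hp hn hcompl horthV hPd hNd
    have hEpdecomp : (Vp ⊓ Ep) ⊔ (Vn ⊓ Ep) = Ep := by
      apply le_antisymm (sup_le inf_le_right inf_le_right)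
      intro x hx
      have hxT : x ∈ Vp ⊔ Vn := by rw [hcompl.sup_eq_top]; trivial
      obtain ⟨a, ha, b, hb, hab⟩ := Submodule.mem_sup.1 hxT
      have hgx : g x = x := (hmemEp x).1 hx
      have h5 : g a + g b = a + b := by rw [← map_add, hab]; exact hgx
      have hkey : a - g a = 0 := by
        have m1 : a - g a ∈ Vp := sub_mem ha (hp a ha)
        have h4 : a - g a = g b - b := by linear_combination (norm := module) (-1 : ℝ) • h5
        have m2 : a - g a ∈ Vn := h4 ▸ sub_mem (hn b hb) hb
        have hm : a - g a ∈ Vp ⊓ Vn := ⟨m1, m2⟩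
        rw [hcompl.inf_eq_bot] at hm
        exact Submodule.mem_bot ℝ |>.1 hm
      have hga : g a = a := by
        have := sub_eq_zero.1 hkey
        exact this.symm
      have hgb : g b = b := by
        rw [hga] at h5
        exact add_left_cancel h5
      exact Submodule.mem_sup.2 ⟨a, ⟨ha, (hmemEp a).2 hga⟩, b, ⟨hb, (hmemEp b).2 hgb⟩, hab⟩
    have hEndecomp : (Vp ⊓ En) ⊔ (Vn ⊓ En) = En := by
      apply le_antisymm (sup_le inf_le_right inf_le_right)
      intro x hx
      have hxT : x ∈ Vp ⊔ Vn := by rw [hcompl.sup_eq_top]; trivial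
      obtain ⟨a, ha, b, hb, hab⟩ := Submodule.mem_sup.1 hxT
      have hgx : g x = -x := (hmemEn x).1 hx
      have h5 : g a + g b = -(a + b) := by rw [← map_add, hab]; exact hgx
      have hkey : a + g a = 0 := by
        have m1 : a + g a ∈ Vp := add_mem ha (hp a ha)
        have h4 : a + g a = -(b + g b) := by linear_combination (norm := module) h5
        have m2 : a + g a ∈ Vn := h4 ▸ neg_mem (add_mem hb (hn b hb))
        have hm : a + g a ∈ Vp ⊓ Vn := ⟨m1, m2⟩
        rw [hcompl.inf_eq_bot] at hm
        exact Submodule.mem_bot ℝ |>.1 hm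
      have hga : g a = -a := by linear_combination (norm := module) hkey
      have hgb : g b = -b := by linear_combination (norm := module) h5 - hga
      exact Submodule.mem_sup.2 ⟨a, ⟨ha, (hmemEn a).2 hga⟩, b, ⟨hb, (hmemEn b).2 hgb⟩, hab⟩
    have a1 : maxPosDim B Ep = finrank ℝ ↥(Vp ⊓ Ep) :=
      maxPosDim_eq_of_decomp B Ep _ _ hEpdecomp (fun x hx h0 => hPd x hx.1 h0)
        (fun x hx h0 => hNd x hx.1 h0)
    have a2 : maxNegDim B Ep = finrank ℝ ↥(Vn ⊓ Ep) :=
      maxNegDim_eq_of_decomp B Ep _ _ hEpdecomp (fun x hx h0 => hPd x hx.1 h0)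
        (fun x hx h0 => hNd x hx.1 h0)
    have b1 : maxPosDim B En = finrank ℝ ↥(Vp ⊓ En) :=
      maxPosDim_eq_of_decomp B En _ _ hEndecomp (fun x hx h0 => hPd x hx.1 h0)
        (fun x hx h0 => hNd x hx.1 h0)
    have b2 : maxNegDim B En = finrank ℝ ↥(Vn ⊓ En) :=
      maxNegDim_eq_of_decomp B En _ _ hEndecomp (fun x hx h0 => hPd x hx.1 h0)
        (fun x hx h0 => hNd x hx.1 h0)
    rw [trace_restrict_involution g hgg Vp hp, trace_restrict_involution g hgg Vn hn,
      ← hEpdef, ← hEndef]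
    simp only [sigOn, a1, a2, b1, b2]
    push_cast
    ring
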